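/- Suppose θ < 0, G' has no negative cycle, T is an SPT of G rooted at s, and dist_G(x₀) + ω'(e₀) < dist_G(y₀). Set δ₁ = dist_G(x₀) + ω'(e₀) − dist_G(y₀). Then for every vertex u that is a descendant of y₀ in T (including y₀ itself), dist_{G'}(u) = dist_G(u) + δ₁. -/

import Mathlib

namespace DynSPT

variable {V : Type*}

/-- The list of consecutive edges of a path given as a list of vertices. -/
def edgeList (l : List V) : List (V × V) := l.zip l.tail

/-- The length of a path with respect to the weight function `ω`. -/
def len (ω : V → V → ℝ) (l : List V) : ℝ :=
  ((edgeList l).map fun p => ω p.1 p.2).sum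

/-- `l` is a path in the directed graph with edge relation `E`. -/
def IsWalk (E : V → V → Prop) (l : List V) : Prop := l ≠ [] ∧ l.Chain' E

/-- `l` is a path from `u` to `v` in the directed graph with edge relation `E`. -/
def IsWalkFrom (E : V → V → Prop) (l : List V) (u v : V) : Prop :=
  IsWalk E l ∧ l.head? = some u ∧ l.getLast? = some v

/-- The path `l` traverses the edge `e`. -/
def Traverses (l : List V) (e : V × V) : Prop := e ∈ edgeList l

/-- `l` is a cycle: a path with at least one edge whose first and last vertices agree. -/
def IsCycle (E : V → V → Prop) (l : List V) : Prop :=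
  ∃ v, IsWalkFrom E l v v ∧ 2 ≤ l.length

/-- The weighted directed graph `(E, ω)` has a negative cycle. -/
def HasNegCycle (E : V → V → Prop) (ω : V → V → ℝ) : Prop :=
  ∃ l, IsCycle E l ∧ len ω l < 0

/-- The weighted directed graph `(E, ω)` has a zero-length cycle. -/
def HasZeroCycle (E : V → V → Prop) (ω : V → V → ℝ) : Prop :=
  ∃ l, IsCycle E l ∧ len ω l = 0

/-- The distance from `s` to `v`: the infimum of the lengths of paths from `s` to `v`. -/
noncomputable def dist (E : V → V → Prop) (ω : V → V → ℝ) (s v : V) : ℝ :=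
  sInf {L : ℝ | ∃ l, IsWalkFrom E l s v ∧ len ω l = L}

/-- A spanning tree of the directed graph `E` rooted at `s`, recorded by the parent
function together with, for every vertex `v`, the tree path from `s` to `v`. -/
structure RootedTree (E : V → V → Prop) (s : V) where
  parent : V → V
  path : V → List V
  path_root : path s = [s]
  parent_edge : ∀ v, v ≠ s → E (parent v) v
  path_eq : ∀ v, v ≠ s → path v = path (parent v) ++ [v]
  path_isWalkFrom : ∀ v, IsWalkFrom E (path v) s v

/-- `(a, b)` is an edge of the rooted tree `T`. -/
def RootedTree.IsEdge {E : V → V → Prop} {s : V} (T : RootedTree E s) (a b : V) : Prop :=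
  b ≠ s ∧ T.parent b = a

/-- `T` is a shortest-path tree for the weight function `ω`:
every tree path from the root is a shortest path. -/
def IsSPT {E : V → V → Prop} {s : V} (ω : V → V → ℝ) (T : RootedTree E s) : Prop :=
  ∀ v, len ω (T.path v) = dist E ω s v


section Lemmas
variable {V : Type*}

theorem edgeList_cons_cons (a b : V) (l : List V) :
    edgeList (a :: b :: l) = (a, b) :: edgeList (b :: l) := rfl

theorem len_nil (ω : V → V → ℝ) : len ω ([] : List V) = 0 := rfl
theorem len_single (ω : V → V → ℝ) (a : V) : len ω [a] = 0 := rfl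
theorem len_cons_cons (ω : V → V → ℝ) (a b : V) (l : List V) :
    len ω (a :: b :: l) = ω a b + len ω (b :: l) := by
  simp [len, edgeList_cons_cons]

theorem edgeList_append_cons : ∀ (xs : List V) (a b : V) (ys : List V),
    edgeList (xs ++ a :: b :: ys) = edgeList (xs ++ [a]) ++ (a, b) :: edgeList (b :: ys)
  | [], a, b, ys => rfl
  | [c], a, b, ys => rfl
  | c :: d :: xs, a, b, ys => by
    show (c, d) :: edgeList (d :: xs ++ a :: b :: ys)
      = (c, d) :: edgeList (d :: xs ++ [a]) ++ (a, b) :: edgeList (b :: ys)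
    rw [edgeList_append_cons (d :: xs) a b ys]; rfl

theorem edgeList_glue {l₁ l₂ : List V} {a : V} (h₁ : l₁.getLast? = some a)
    (h₂ : l₂.head? = some a) :
    edgeList (l₁ ++ l₂.tail) = edgeList l₁ ++ edgeList l₂ := by
  obtain ⟨t, rfl⟩ : ∃ t, l₂ = a :: t := by
    cases l₂ with
    | nil => simp at h₂
    | cons x t => exact ⟨t, by simp at h₂; rw [h₂]⟩
  have hne : l₁ ≠ [] := by rintro rfl; simp at h₁
  obtain ⟨q, rfl⟩ : ∃ q, l₁ = q ++ [a] := by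
    refine ⟨l₁.dropLast, ?_⟩
    rw [List.getLast?_eq_getLast hne, Option.some_inj] at h₁
    rw [← h₁]; exact (List.dropLast_append_getLast hne).symm
  cases t with
  | nil => simp [edgeList]
  | cons b t' =>
    rw [List.append_assoc]
    exact edgeList_append_cons q a b t'

theorem len_glue (ω : V → V → ℝ) {l₁ l₂ : List V} {a : V} (h₁ : l₁.getLast? = some a)
    (h₂ : l₂.head? = some a) :
    len ω (l₁ ++ l₂.tail) = len ω l₁ + len ω l₂ := by
  simp [len, edgeList_glue h₁ h₂]

theorem IsWalkFrom.glue {E : V → V → Prop} {l₁ l₂ : List V} {s a v : V}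
    (h₁ : IsWalkFrom E l₁ s a) (h₂ : IsWalkFrom E l₂ a v) :
    IsWalkFrom E (l₁ ++ l₂.tail) s v := by
  obtain ⟨⟨hne₁, hc₁⟩, hh₁, hl₁⟩ := h₁
  obtain ⟨⟨hne₂, hc₂⟩, hh₂, hl₂⟩ := h₂
  obtain ⟨t, rfl⟩ : ∃ t, l₂ = a :: t := by
    cases l₂ with
    | nil => simp at hh₂
    | cons x t => exact ⟨t, by simp at hh₂; rw [hh₂]⟩
  refine ⟨⟨by simp [hne₁], ?_⟩, ?_, ?_⟩
  · rw [List.tail_cons]; unfold List.Chain'; rw [List.isChain_append]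
    refine ⟨hc₁, (List.isChain_cons.mp hc₂).2, fun x hx y hy => ?_⟩
    simp only [hl₁, Option.mem_def, Option.some_inj] at hx
    subst hx
    exact (List.isChain_cons.mp hc₂).1 y hy
  · cases l₁ with
    | nil => exact absurd rfl hne₁
    | cons c l₁' => simpa using hh₁
  · cases t with
    | nil =>
      simp only [List.tail_cons, List.append_nil]
      simp only [List.getLast?_singleton, Option.some_inj] at hl₂
      rw [hl₁, hl₂]
    | cons b t' =>
      rw [List.tail_cons, List.getLast?_append_of_ne_nil _ (by simp)]
      simpa using hl₂

theorem split_at_vertex {E : V → V → Prop} {xs ys : List V} {s a v : V}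
    (h : IsWalkFrom E (xs ++ a :: ys) s v) :
    IsWalkFrom E (xs ++ [a]) s a ∧ IsWalkFrom E (a :: ys) a v := by
  obtain ⟨⟨hne, hc⟩, hh, hl⟩ := h
  have hsplit : xs ++ a :: ys = (xs ++ [a]) ++ ys := by simp
  rw [hsplit] at hc
  unfold List.Chain' at hc; rw [List.isChain_append] at hc
  obtain ⟨hcA, hcys, hlink⟩ := hc
  have hlastA : (xs ++ [a]).getLast? = some a := by simp
  constructor
  · refine ⟨⟨by simp, hcA⟩, ?_, hlastA⟩
    cases xs with
    | nil =>
      simp only [List.nil_append] at hh ⊢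
      cases ys <;> simpa using hh
    | cons c xs' => simpa using hh
  · refine ⟨⟨by simp, ?_⟩, rfl, ?_⟩
    · unfold List.Chain'; rw [List.isChain_cons]
      exact ⟨fun y hy => hlink a (by simp) y hy, hcys⟩
    · cases ys with
      | nil => simpa using hl
      | cons b ys' =>
        rw [List.getLast?_append_of_ne_nil _ (by simp)] at hl
        exact hl

theorem len_split (ω : V → V → ℝ) (xs : List V) (a : V) (ys : List V) :
    len ω (xs ++ a :: ys) = len ω (xs ++ [a]) + len ω (a :: ys) := by
  have h1 : xs ++ a :: ys = (xs ++ [a]) ++ (a :: ys).tail := by simp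
  have h2 : (a :: ys).head? = some a := rfl
  rw [h1, len_glue ω (a := a) (by simp) h2]

theorem cycle_nonneg {E : V → V → Prop} {ω : V → V → ℝ} (h : ¬ HasNegCycle E ω)
    {l : List V} (hl : IsCycle E l) : 0 ≤ len ω l :=
  not_lt.mp fun hneg => h ⟨l, hl, hneg⟩

theorem exists_mem_split {l : List V} {a b : V} (h : (a, b) ∈ edgeList l) :
    ∃ xs ys, l = xs ++ a :: b :: ys := by
  induction l with
  | nil => simp [edgeList] at h
  | cons c t ih =>
    cases t with
    | nil => simp [edgeList] at h
    | cons d t' =>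
      rw [edgeList_cons_cons, List.mem_cons] at h
      rcases h with h | h
      · rw [Prod.mk.injEq] at h
        obtain ⟨rfl, rfl⟩ := h
        exact ⟨[], t', rfl⟩
      · obtain ⟨xs, ys, hxy⟩ := ih h
        exact ⟨c :: xs, ys, by rw [List.cons_append, ← hxy]⟩

theorem exists_last_split_aux : ∀ (n : ℕ) (l : List V), l.length ≤ n → ∀ {a b : V},
    (a, b) ∈ edgeList l →
    ∃ xs ys, l = xs ++ a :: b :: ys ∧ (a, b) ∉ edgeList (b :: ys) := by
  intro n
  induction n with
  | zero =>
    intro l hl a b h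
    rw [Nat.le_zero, List.length_eq_zero_iff] at hl
    subst hl
    simp [edgeList] at h
  | succ n ih =>
    intro l hl a b h
    obtain ⟨xs, ys, rfl⟩ := exists_mem_split h
    by_cases h2 : (a, b) ∈ edgeList (b :: ys)
    · obtain ⟨xs', ys', heq, hnot⟩ := ih (b :: ys) (by simp at hl ⊢; omega) h2
      exact ⟨xs ++ a :: xs', ys', by rw [heq]; simp, hnot⟩
    · exact ⟨xs, ys, rfl, h2⟩

theorem exists_last_split {l : List V} {a b : V} (h : (a, b) ∈ edgeList l) :
    ∃ xs ys, l = xs ++ a :: b :: ys ∧ (a, b) ∉ edgeList (b :: ys) :=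
  exists_last_split_aux l.length l (le_refl _) h

theorem len_congr_of_not_traverses {ω ω' : V → V → ℝ} {x₀ y₀ : V}
    (hω' : ∀ a b, (a, b) ≠ (x₀, y₀) → ω' a b = ω a b) {l : List V}
    (h : (x₀, y₀) ∉ edgeList l) : len ω' l = len ω l := by
  unfold len
  congr 1
  refine List.map_congr_left fun p hp => ?_
  exact hω' p.1 p.2 (by rintro hpe; exact h (by rwa [← hpe]))

theorem exists_dup_split : ∀ {l : List V}, ¬ l.Nodup →
    ∃ (c : V) (xs ys zs : List V), l = xs ++ c :: (ys ++ c :: zs) := by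
  intro l
  induction l with
  | nil => intro h; exact absurd List.nodup_nil h
  | cons b t ih =>
    intro h
    rw [List.nodup_cons] at h
    push_neg at h
    by_cases hb : b ∈ t
    · obtain ⟨ys, zs, rfl⟩ := List.append_of_mem hb
      exact ⟨b, [], ys, zs, rfl⟩
    · obtain ⟨c, xs, ys, zs, rfl⟩ := ih (h hb)
      exact ⟨c, b :: xs, ys, zs, rfl⟩

theorem exists_nodup_walk {E : V → V → Prop} {ω : V → V → ℝ}
    (hG : ¬ HasNegCycle E ω) {s v : V} :
    ∀ (n : ℕ) (l : List V), l.length ≤ n → IsWalkFrom E l s v →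
      ∃ l', IsWalkFrom E l' s v ∧ l'.Nodup ∧ len ω l' ≤ len ω l := by
  intro n
  induction n with
  | zero =>
    intro l hl hw
    rw [Nat.le_zero, List.length_eq_zero_iff] at hl
    subst hl
    exact absurd rfl hw.1.1
  | succ n ih =>
    intro l hl hw
    by_cases hnd : l.Nodup
    · exact ⟨l, hw, hnd, le_refl _⟩
    · obtain ⟨c, xs, ys, zs, rfl⟩ := exists_dup_split hnd
      obtain ⟨hA, hR⟩ := split_at_vertex hw
      have hR' : IsWalkFrom E ((c :: ys) ++ c :: zs) c v := hR
      obtain ⟨hB, hC⟩ := split_at_vertex hR'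
      have hcycB : IsCycle E ((c :: ys) ++ [c]) := ⟨c, hB, by simp⟩
      have hlenB : 0 ≤ len ω ((c :: ys) ++ [c]) := cycle_nonneg hG hcycB
      have hglue : IsWalkFrom E ((xs ++ [c]) ++ (c :: zs).tail) s v := hA.glue hC
      have hlen : len ω ((xs ++ [c]) ++ (c :: zs).tail) ≤
          len ω (xs ++ c :: (ys ++ c :: zs)) := by
        have hh : (c :: zs).head? = some c := rfl
        rw [len_glue ω (a := c) (by simp) hh, len_split ω xs c (ys ++ c :: zs)]
        have : len ω (c :: (ys ++ c :: zs)) =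
            len ω ((c :: ys) ++ [c]) + len ω (c :: zs) := by
          have h2 : c :: (ys ++ c :: zs) = (c :: ys) ++ c :: zs := by simp
          rw [h2, len_split ω (c :: ys) c zs]
        rw [this]
        linarith
      have hshort : ((xs ++ [c]) ++ (c :: zs).tail).length ≤ n := by
        simp at hl ⊢; omega
      obtain ⟨l', hw', hnd', hle'⟩ := ih _ hshort hglue
      exact ⟨l', hw', hnd', hle'.trans hlen⟩

theorem bddBelow_walkLens {E : V → V → Prop} {ω : V → V → ℝ} [Fintype V]
    (hG : ¬ HasNegCycle E ω) (s v : V) :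
    BddBelow {L : ℝ | ∃ l, IsWalkFrom E l s v ∧ len ω l = L} := by
  have hF : {l : List V | l.length ≤ Fintype.card V}.Finite := List.finite_length_le V _
  obtain ⟨b, hb⟩ := (hF.image (len ω)).bddBelow
  refine ⟨b, fun L hL => ?_⟩
  obtain ⟨l, hl, rfl⟩ := hL
  obtain ⟨l', hw', hnd', hle'⟩ := exists_nodup_walk hG l.length l (le_refl _) hl
  exact (hb ⟨l', hnd'.length_le_card, rfl⟩).trans hle'

theorem dist_le {E : V → V → Prop} {ω : V → V → ℝ} [Fintype V]
    (hG : ¬ HasNegCycle E ω) {s v : V} {l : List V} (h : IsWalkFrom E l s v) :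
    dist E ω s v ≤ len ω l :=
  csInf_le (bddBelow_walkLens hG s v) ⟨l, h, rfl⟩

theorem path_getLast {E : V → V → Prop} {s : V} (T : RootedTree E s) (u : V) :
    (T.path u).getLast? = some u := (T.path_isWalkFrom u).2.2

theorem path_suffix {E : V → V → Prop} {s : V} (T : RootedTree E s) (y₀ : V) :
    ∀ (n : ℕ) (u : V), (T.path u).length ≤ n → y₀ ∈ T.path u →
      ∃ D, T.path u = T.path y₀ ++ D := by
  intro n
  induction n with
  | zero =>
    intro u hu hmem
    have := (T.path_isWalkFrom u).1.1
    cases hpe : T.path u with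
    | nil => exact absurd hpe this
    | cons c t => rw [hpe] at hu; simp at hu
  | succ n ih =>
    intro u hu hmem
    by_cases hy : u = y₀
    · exact ⟨[], by rw [hy, List.append_nil]⟩
    by_cases hs : u = s
    · subst hs
      rw [T.path_root] at hmem
      simp at hmem
      exact absurd hmem.symm hy
    · rw [T.path_eq u hs] at hmem ⊢
      rw [List.mem_append] at hmem
      rcases hmem with hmem | hmem
      · obtain ⟨D, hD⟩ := ih (T.parent u)
          (by rw [T.path_eq u hs] at hu; simp at hu; omega) hmem
        exact ⟨D ++ [u], by rw [hD]; simp⟩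
      · simp at hmem; exact absurd hmem.symm hy

theorem len_mono {ω ω' : V → V → ℝ} (h : ∀ a b, ω' a b ≤ ω a b) (l : List V) :
    len ω' l ≤ len ω l :=
  List.sum_le_sum fun p _ => h p.1 p.2

end Lemmas

theorem statement_15
    {V : Type*} [Fintype V] (E : V → V → Prop) (ω ω' : V → V → ℝ) (s x₀ y₀ : V)
    (hE₀ : E x₀ y₀)
    (hreach : ∀ v, ∃ l, IsWalkFrom E l s v)
    (hω' : ∀ a b, (a, b) ≠ (x₀, y₀) → ω' a b = ω a b)
    (hG : ¬ HasNegCycle E ω)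
    (hθ : ω' x₀ y₀ - ω x₀ y₀ < 0) (hG' : ¬ HasNegCycle E ω')
    (T : RootedTree E s) (hT : IsSPT ω T)
    (hlt : dist E ω s x₀ + ω' x₀ y₀ < dist E ω s y₀) :
    ∀ u, y₀ ∈ T.path u →
      dist E ω' s u = dist E ω s u + (dist E ω s x₀ + ω' x₀ y₀ - dist E ω s y₀) := by
  intro u hu
  have hωle : ∀ a b, ω' a b ≤ ω a b := by
    intro a b
    by_cases h : (a, b) = (x₀, y₀)
    · rw [Prod.mk.injEq] at h
      obtain ⟨rfl, rfl⟩ := h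
      linarith
    · rw [hω' a b h]
  have hTy := hT y₀
  have hTx := hT x₀
  have hTu := hT u
  -- descendant decomposition
  obtain ⟨D, hD⟩ := path_suffix T y₀ (T.path u).length u (le_refl _) hu
  have hyne : T.path y₀ ≠ [] := (T.path_isWalkFrom y₀).1.1
  have hylast : (T.path y₀).getLast? = some y₀ := path_getLast T y₀
  obtain ⟨Q, hQ⟩ : ∃ Q, T.path y₀ = Q ++ [y₀] := by
    refine ⟨(T.path y₀).dropLast, ?_⟩
    have h5 := List.dropLast_append_getLast hyne
    rw [List.getLast?_eq_getLast hyne, Option.some_inj] at hylast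
    rw [hylast] at h5
    exact h5.symm
  have hPu : T.path u = Q ++ y₀ :: D := by rw [hD, hQ]; simp
  have hwalku := T.path_isWalkFrom u
  rw [hPu] at hwalku
  obtain ⟨hwQ, hwC⟩ := split_at_vertex hwalku
  have hlenu : len ω (T.path u) = len ω (T.path y₀) + len ω (y₀ :: D) := by
    rw [hPu, len_split ω Q y₀ D, ← hQ]
  have hlenC : len ω (y₀ :: D) = dist E ω s u - dist E ω s y₀ := by
    rw [hTy, hTu] at hlenu; linarith
  -- claim A : any walk from s to x₀ has ω'-length at least dist_G(x₀)
  have claimA : ∀ (n : ℕ) (l : List V), l.length ≤ n → IsWalkFrom E l s x₀ →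
      dist E ω s x₀ ≤ len ω' l := by
    intro n
    induction n with
    | zero =>
      intro l hl hw
      rw [Nat.le_zero, List.length_eq_zero_iff] at hl
      subst hl; exact absurd rfl hw.1.1
    | succ n ih =>
      intro l hl hw
      by_cases htr : (x₀, y₀) ∈ edgeList l
      · obtain ⟨xs, ys, rfl⟩ := exists_mem_split htr
        obtain ⟨hA, hR⟩ := split_at_vertex (ys := y₀ :: ys) hw
        have hcyc : IsCycle E (x₀ :: y₀ :: ys) := ⟨x₀, hR, by simp⟩
        have h0 : 0 ≤ len ω' (x₀ :: y₀ :: ys) := cycle_nonneg hG' hcyc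
        have h1 := ih (xs ++ [x₀]) (by simp at hl ⊢; omega) hA
        rw [len_split ω' xs x₀ (y₀ :: ys)]
        linarith
      · rw [len_congr_of_not_traverses hω' htr]
        exact dist_le hG hw
  -- upper bound
  have hub : dist E ω' s u ≤
      dist E ω s u + (dist E ω s x₀ + ω' x₀ y₀ - dist E ω s y₀) := by
    have hwx := T.path_isWalkFrom x₀
    have hedge : IsWalkFrom E [x₀, y₀] x₀ y₀ := ⟨⟨by simp, List.isChain_pair.mpr hE₀⟩, by simp, by simp⟩
    have hW1 : IsWalkFrom E (T.path x₀ ++ [y₀]) s y₀ := by simpa using hwx.glue hedge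
    have hW : IsWalkFrom E ((T.path x₀ ++ [y₀]) ++ (y₀ :: D).tail) s u := hW1.glue hwC
    have hhC : (y₀ :: D).head? = some y₀ := rfl
    have hhe : ([x₀, y₀] : List V).head? = some x₀ := rfl
    have hte : T.path x₀ ++ [y₀] = T.path x₀ ++ ([x₀, y₀] : List V).tail := rfl
    have hlenW : len ω' ((T.path x₀ ++ [y₀]) ++ (y₀ :: D).tail)
        = len ω' (T.path x₀) + ω' x₀ y₀ + len ω' (y₀ :: D) := by
      rw [len_glue ω' (l₂ := y₀ :: D) (by simp) hhC, hte,
        len_glue ω' (path_getLast T x₀) hhe, len_cons_cons, len_single]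
      ring
    have h1 : dist E ω' s u ≤ len ω' ((T.path x₀ ++ [y₀]) ++ (y₀ :: D).tail) :=
      dist_le hG' hW
    rw [hlenW] at h1
    have h2 : len ω' (T.path x₀) ≤ len ω (T.path x₀) := len_mono hωle _
    have h3 : len ω' (y₀ :: D) ≤ len ω (y₀ :: D) := len_mono hωle _
    rw [hTx] at h2
    rw [hlenC] at h3
    linarith
  -- lower bound
  have hlb : dist E ω s u + (dist E ω s x₀ + ω' x₀ y₀ - dist E ω s y₀) ≤
      dist E ω' s u := by
    obtain ⟨l0, hl0⟩ := hreach u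
    refine le_csInf ⟨len ω' l0, l0, hl0, rfl⟩ ?_
    rintro L ⟨l, hw, rfl⟩
    by_cases htr : (x₀, y₀) ∈ edgeList l
    · obtain ⟨xs, ys, rfl, hfree⟩ := exists_last_split htr
      obtain ⟨hA, hR⟩ := split_at_vertex (ys := y₀ :: ys) hw
      have hR' : IsWalkFrom E ([x₀] ++ y₀ :: ys) x₀ u := hR
      obtain ⟨-, hC⟩ := split_at_vertex hR'
      have h1 : dist E ω s x₀ ≤ len ω' (xs ++ [x₀]) :=
        claimA (xs ++ [x₀]).length _ (le_refl _) hA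
      have h2 : len ω' (y₀ :: ys) = len ω (y₀ :: ys) :=
        len_congr_of_not_traverses hω' hfree
      have hhC : (y₀ :: ys).head? = some y₀ := rfl
      have hglue2 : IsWalkFrom E (T.path y₀ ++ (y₀ :: ys).tail) s u :=
        (T.path_isWalkFrom y₀).glue hC
      have h3 : dist E ω s u ≤ len ω (T.path y₀) + len ω (y₀ :: ys) := by
        rw [← len_glue ω (path_getLast T y₀) hhC]
        exact dist_le hG hglue2
      rw [len_split ω' xs x₀ (y₀ :: ys), len_cons_cons ω' x₀ y₀ ys]
      rw [hTy] at h3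
      linarith
    · rw [len_congr_of_not_traverses hω' htr]
      have := dist_le hG hw
      linarith
  linarith

end DynSPT
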